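/- Let F be a p-adic field, G a connected reductive group over F with simply connected derived group, G' an inner form of G with inner twist ξ: G'_{F̄} ≅ G_{F̄}. Let T ⊂ G and T' ⊂ G' be elliptic maximal tori whose stable conjugacy classes correspond under the natural bijection (i.e. ξ(T'(F)) and T(F) are conjugate in G(F̄)). Then the Weyl groups W_T = N_G(T)/T and W_{T'} = N_{G'}(T')/T', viewed as finite algebraic groups over F, are isomorphic over F; in particular #W_T(F) = #W_{T'}(F). -/

import Mathlib

/-!
Conjugation by `h⁻¹` carries `T' = Z(t')` onto `T = Z(t)`, hence `N(T')` onto `N(T)`. It is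
Galois-equivariant modulo `T`: writing `a = c_γ · σ_γ(h) · h⁻¹`, one has
`σ_γ ∘ Ad(h⁻¹) = Ad(h⁻¹) ∘ Ad(a⁻¹) ∘ σ'_γ`, and `a` centralizes `t'` because `t` and `t'` are
rational. Since `Ad(a⁻¹)` is trivial modulo `T'` on `N(T')`, the induced isomorphism
`N(T')/T' ≃ N(T)/T` matches the rational Weyl elements on both sides.
-/

open Subgroup

section

variable {G : Type*} [Group G]

theorem Subgroup.map_centralizer_singleton {G' : Type*} [Group G'] (f : G ≃* G') (t : G) :
    (centralizer {t}).map f.toMonoidHom = centralizer {f t} := by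
  ext x
  rw [mem_map_equiv, mem_centralizer_singleton_iff, mem_centralizer_singleton_iff,
    ← f.injective.eq_iff, map_mul, map_mul, f.apply_symm_apply]

theorem Subgroup.map_conj_centralizer_singleton {t t' h : G} (hmatch : t = h⁻¹ * t' * h) :
    (centralizer {t'}).map (MulAut.conj h⁻¹).toMonoidHom = centralizer {t} := by
  rw [map_centralizer_singleton, hmatch, MulAut.conj_apply, inv_inv]

theorem Subgroup.map_mem_normalizer_centralizer_singleton {f : G ≃* G} {t n : G} (ht : f t = t)
    (hn : n ∈ normalizer (centralizer {t} : Set G)) :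
    f n ∈ normalizer (centralizer {t} : Set G) := by
  have hN := map_equiv_normalizer_eq (centralizer {t}) f
  rw [map_centralizer_singleton, ht] at hN
  exact hN ▸ mem_map_of_mem _ hn

end

section InnerTwist

variable {G : Type*} [Group G] {s s' : G ≃* G} {c t t' h : G}

theorem inner_twist_defect_mem_centralizer (hinner : ∀ x, s' x = c * s x * c⁻¹)
    (ht : s t = t) (ht' : s' t' = t') (hmatch : t = h⁻¹ * t' * h) :
    c * s h * h⁻¹ ∈ centralizer {t'} := by
  subst hmatch
  have hconj : c * s h * h⁻¹ * t' * (c * s h * h⁻¹)⁻¹ = t' := by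
    conv_rhs => rw [← ht', show t' = h * (h⁻¹ * t' * h) * h⁻¹ by group]
    rw [hinner, map_mul, map_mul, ht, map_inv]
    group
  exact mem_centralizer_singleton_iff.mpr (mul_inv_eq_iff_eq_mul.mp hconj)

theorem conj_equivariant_mod_centralizer (hinner : ∀ x, s' x = c * s x * c⁻¹)
    (ht : s t = t) (ht' : s' t' = t') (hmatch : t = h⁻¹ * t' * h) {n : G}
    (hn : n ∈ normalizer (centralizer {t'} : Set G)) :
    s (MulAut.conj h⁻¹ n) * (MulAut.conj h⁻¹ (s' n))⁻¹ ∈ centralizer {t} := by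
  set a := c * s h * h⁻¹
  have ha : a ∈ centralizer {t'} := inner_twist_defect_mem_centralizer hinner ht ht' hmatch
  have hsn := map_mem_normalizer_centralizer_singleton ht' hn
  have hdefect : a⁻¹ * (s' n * a * (s' n)⁻¹) ∈ centralizer {t'} :=
    mul_mem (inv_mem ha) ((mem_normalizer_iff.mp hsn a).mp ha)
  have hid : s (MulAut.conj h⁻¹ n) * (MulAut.conj h⁻¹ (s' n))⁻¹ =
      MulAut.conj h⁻¹ (a⁻¹ * (s' n * a * (s' n)⁻¹)) := by
    simp only [MulAut.conj_apply]
    simp only [a, hinner, map_mul, map_inv]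
    group
  rw [hid, ← map_conj_centralizer_singleton hmatch]
  exact mem_map_of_mem _ hdefect

end InnerTwist

section RationalWeyl

variable {G Γ : Type*} [Group G] [Monoid Γ]

/-- The `F`-points `W_T(F)` of the Weyl group `N(T)/T`, for the Galois action `σ`: the cosets
each of whose representatives `n` satisfies `σ γ n ≡ n` modulo `T`. -/
def rationalWeyl (σ : Γ →* MulAut G) (T : Subgroup G) :
    Set (normalizer (T : Set G) ⧸ T.subgroupOf (normalizer (T : Set G))) :=
  {w | ∀ γ (n : normalizer (T : Set G)), (n : normalizer (T : Set G) ⧸ _) = w →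
    σ γ (n : G) * (n : G)⁻¹ ∈ T}

theorem card_rationalWeyl_eq_of_equivariant {σ σ' : Γ →* MulAut G} {T T' : Subgroup G}
    (φ : G ≃* G) (hφT : T'.map φ.toMonoidHom = T)
    (hφσ : ∀ γ, ∀ n ∈ normalizer (T' : Set G), σ γ (φ n) * (φ (σ' γ n))⁻¹ ∈ T) :
    Nat.card (rationalWeyl σ T) = Nat.card (rationalWeyl σ' T') := by
  have hφN : (normalizer (T' : Set G)).map φ.toMonoidHom = normalizer (T : Set G) :=
    hφT ▸ map_equiv_normalizer_eq T' φ
  have hmem : ∀ x, φ x ∈ T ↔ x ∈ T' := fun x => hφT ▸ mem_map_iff_mem φ.injective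
  let e := (φ.subgroupMap (normalizer (T' : Set G))).trans (MulEquiv.subgroupCongr hφN)
  have he : (T'.subgroupOf (normalizer (T' : Set G))).map e.toMonoidHom =
      T.subgroupOf (normalizer (T : Set G)) := by
    ext x
    rw [mem_map_equiv, mem_subgroupOf, mem_subgroupOf, ← hmem,
      show φ (e.symm x) = x from congrArg Subtype.val (e.apply_symm_apply x)]
  have hrational : ∀ γ (n : normalizer (T' : Set G)),
      σ γ (φ n) * (φ n)⁻¹ ∈ T ↔ σ' γ (n : G) * (n : G)⁻¹ ∈ T' := by
    intro γ n
    have hsplit : σ γ (φ n) * (φ n)⁻¹ =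
        σ γ (φ n) * (φ (σ' γ n))⁻¹ * φ (σ' γ (n : G) * (n : G)⁻¹) := by
      rw [map_mul φ, map_inv φ]
      group
    rw [hsplit, mul_mem_cancel_left (hφσ γ n n.2), hmem]
  let Q := QuotientGroup.congr _ _ e he
  refine (Nat.card_congr (Equiv.subtypeEquiv Q.toEquiv fun w => ?_)).symm
  exact forall_congr' fun γ => e.toEquiv.forall_congr fun n =>
    imp_congr (Q.injective.eq_iff (a := n)).symm (hrational γ n).symm

end RationalWeyl

theorem weyl_groups_of_stably_conjugate_tori_isomorphic
    (Gbar Γ : Type) [Group Gbar] [Group Γ]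
    (σ σ' : Γ →* MulAut Gbar)
    (c : Γ → Gbar)
    (hinner : ∀ (γ : Γ) (x : Gbar), σ' γ x = c γ * σ γ x * (c γ)⁻¹)
    (t t' h : Gbar)
    (T T' : Subgroup Gbar)
    (hT : T = Subgroup.centralizer {t})
    (hT' : T' = Subgroup.centralizer {t'})
    (ht : ∀ γ : Γ, σ γ t = t)
    (ht' : ∀ γ : Γ, σ' γ t' = t')
    (hmatch : t = h⁻¹ * t' * h) :
    (∃ φ : Gbar ≃* Gbar,
      (∀ x : Gbar, φ x = h⁻¹ * x * h) ∧
      Subgroup.map φ.toMonoidHom T' = T ∧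
      Subgroup.map φ.toMonoidHom (Subgroup.normalizer (T' : Set Gbar)) = (Subgroup.normalizer (T : Set Gbar)) ∧
      (∀ (γ : Γ), ∀ n ∈ (Subgroup.normalizer (T' : Set Gbar)), σ γ (φ n) * (φ (σ' γ n))⁻¹ ∈ T)) ∧
    Nat.card {w : (Subgroup.normalizer (T : Set Gbar)) ⧸ T.subgroupOf (Subgroup.normalizer (T : Set Gbar)) //
        ∀ (γ : Γ) (n : (Subgroup.normalizer (T : Set Gbar))),
          (QuotientGroup.mk n : (Subgroup.normalizer (T : Set Gbar)) ⧸ T.subgroupOf (Subgroup.normalizer (T : Set Gbar))) = w →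
          σ γ (n : Gbar) * (n : Gbar)⁻¹ ∈ T} =
    Nat.card {w : (Subgroup.normalizer (T' : Set Gbar)) ⧸ T'.subgroupOf (Subgroup.normalizer (T' : Set Gbar)) //
        ∀ (γ : Γ) (n : (Subgroup.normalizer (T' : Set Gbar))),
          (QuotientGroup.mk n : (Subgroup.normalizer (T' : Set Gbar)) ⧸ T'.subgroupOf (Subgroup.normalizer (T' : Set Gbar))) = w →
          σ' γ (n : Gbar) * (n : Gbar)⁻¹ ∈ T'} := by
  subst hT hT'
  let φ : Gbar ≃* Gbar := MulAut.conj h⁻¹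
  have hφT := map_conj_centralizer_singleton hmatch
  have hφσ : ∀ γ, ∀ n ∈ normalizer (centralizer {t'} : Set Gbar),
      σ γ (φ n) * (φ (σ' γ n))⁻¹ ∈ centralizer {t} := fun γ _ hn =>
    conj_equivariant_mod_centralizer (hinner γ) (ht γ) (ht' γ) hmatch hn
  refine ⟨⟨φ, fun x => ?_, hφT, hφT ▸ map_equiv_normalizer_eq _ φ, hφσ⟩,
    card_rationalWeyl_eq_of_equivariant φ hφT hφσ⟩
  rw [MulAut.conj_apply, inv_inv]
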